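/- arXiv:2005.13639 — 4 statements merged into one kernel-verified Lean document; each statement's English description precedes it below -/
import Mathlib

section
/- (Descent direction lemma) Let H̃ = V T Vᵀ + c U Uᵀ be symmetric positive definite, where V ∈ ℝ^{n×l} has orthonormal columns, U spans the orthogonal complement of the range of V, T ∈ ℝ^{l×l} is symmetric positive definite, and c > 0. Suppose the first column of V is ∇f(x)/‖∇f(x)‖₂ (with ∇f(x) ≠ 0). Let y = x − μ V T⁻¹ Vᵀ ∇f(x) for some μ > 0, let x⁺ = Π_{H̃}(y) be the projection of y onto a box C ∋ x in the H̃-norm, and set d = x⁺ − x. Then ∇f(x)ᵀ d ≤ −(1/μ) dᵀ H̃ d ≤ 0; in particular d is a descent direction whenever d ≠ 0. -/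
open Matrix Filter Topology

/-! Since `U Uᵀ V = 0` and `Vᵀ V = 1`, the model Hessian satisfies `H̃ (V T⁻¹ Vᵀ) = V Vᵀ`, and
`V Vᵀ g = g` because `g` is a multiple of the first column of `V`; so the unprojected step
`s = μ V T⁻¹ Vᵀ g` has `H̃ s = μ g`. The `H̃`-projection `x⁺` of `y = x - s` onto the convex box
satisfies the variational inequality `(x - x⁺)ᵀ H̃ (x⁺ - y) ≥ 0`, and substituting
`x - x⁺ = -d`, `x⁺ - y = d + s` turns it into `-dᵀ H̃ d - μ gᵀ d ≥ 0`. -/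

namespace Matrix

variable {n R : Type*} [Fintype n] [CommRing R]

theorem IsSymm.dotProduct_mulVec_comm {H : Matrix n n R} (hH : H.IsSymm) (u w : n → R) :
    u ⬝ᵥ H *ᵥ w = w ⬝ᵥ H *ᵥ u := by
  rw [dotProduct_mulVec, ← mulVec_transpose, hH.eq, dotProduct_comm]

theorem IsSymm.dotProduct_mulVec_add_smul {H : Matrix n n R} (hH : H.IsSymm) (u w : n → R)
    (t : R) : (u + t • w) ⬝ᵥ H *ᵥ (u + t • w)
      = u ⬝ᵥ H *ᵥ u + t * (2 * (w ⬝ᵥ H *ᵥ u) + t * (w ⬝ᵥ H *ᵥ w)) := by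
  simp only [mulVec_add, mulVec_smul, dotProduct_add, add_dotProduct, dotProduct_smul,
    smul_dotProduct, smul_eq_mul, hH.dotProduct_mulVec_comm u w]
  ring

end Matrix

theorem nonneg_of_forall_nonneg_add_mul {a b : ℝ} (h : ∀ t, 0 < t → t ≤ 1 → 0 ≤ a + t * b) :
    0 ≤ a := by
  have hlim : Tendsto (fun t => a + t * b) (𝓝[>] 0) (𝓝 a) := by
    have hcont : Continuous fun t : ℝ => a + t * b := by fun_prop
    exact (hcont.tendsto' 0 a (by simp)).mono_left nhdsWithin_le_nhds
  refine ge_of_tendsto hlim ?_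
  filter_upwards [Ioc_mem_nhdsGT one_pos] with t ht using h t ht.1 ht.2

theorem dotProduct_mulVec_sub_nonneg_of_forall_le {n : Type*} [Fintype n] {H : Matrix n n ℝ}
    (hH : H.IsSymm) {C : Set (n → ℝ)} (hC : Convex ℝ C) {y p z : n → ℝ} (hp : p ∈ C)
    (hmin : ∀ z ∈ C, (p - y) ⬝ᵥ H *ᵥ (p - y) ≤ (z - y) ⬝ᵥ H *ᵥ (z - y)) (hz : z ∈ C) :
    0 ≤ (z - p) ⬝ᵥ H *ᵥ (p - y) := by
  suffices 0 ≤ 2 * ((z - p) ⬝ᵥ H *ᵥ (p - y)) by linarith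
  refine nonneg_of_forall_nonneg_add_mul (b := (z - p) ⬝ᵥ H *ᵥ (z - p)) fun t ht0 ht1 => ?_
  have hmem := hmin _ (hC.add_smul_sub_mem hp hz ⟨ht0.le, ht1⟩)
  rw [add_sub_right_comm, hH.dotProduct_mulVec_add_smul] at hmem
  exact nonneg_of_mul_nonneg_right (by linarith) ht0

namespace Matrix

variable {m l R : Type*} [Fintype m] [Fintype l] [DecidableEq l] [CommRing R] {V : Matrix m l R}

theorem one_sub_mul_transpose_mul_self [DecidableEq m] (hV : Vᵀ * V = 1) :
    (1 - V * Vᵀ) * V = 0 := by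
  rw [Matrix.sub_mul, Matrix.one_mul, Matrix.mul_assoc, hV, Matrix.mul_one, sub_self]

theorem mul_transpose_mulVec_mulVec (hV : Vᵀ * V = 1) (w : l → R) :
    (V * Vᵀ) *ᵥ (V *ᵥ w) = V *ᵥ w := by
  rw [mulVec_mulVec, Matrix.mul_assoc, hV, Matrix.mul_one]

theorem add_smul_mul_mul_nonsing_inv_mul_transpose (hV : Vᵀ * V = 1)
    {T : Matrix l l R} (hT : IsUnit T.det) {P : Matrix m m R} (hP : P * V = 0) (c : R) :
    (V * T * Vᵀ + c • P) * (V * T⁻¹ * Vᵀ) = V * Vᵀ := by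
  have hPV : P * (V * T⁻¹ * Vᵀ) = 0 := by simp only [← Matrix.mul_assoc, hP, Matrix.zero_mul]
  calc (V * T * Vᵀ + c • P) * (V * T⁻¹ * Vᵀ) = V * (T * (Vᵀ * V) * T⁻¹) * Vᵀ := by
        rw [Matrix.add_mul, Matrix.smul_mul, hPV, smul_zero, add_zero]
        simp only [Matrix.mul_assoc]
    _ = V * Vᵀ := by rw [hV, Matrix.mul_one, mul_nonsing_inv T hT, Matrix.mul_one]

end Matrix

theorem eq_sqrt_dotProduct_self_smul {n : Type*} [Fintype n] {g v : n → ℝ}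
    (hv : ∀ i, v i = g i / √(g ⬝ᵥ g)) : g = √(g ⬝ᵥ g) • v := by
  have hg : √(g ⬝ᵥ g) = 0 → g = 0 := fun h => dotProduct_self_eq_zero.mp <|
    le_antisymm (Real.sqrt_eq_zero'.mp h) (by simpa using dotProduct_self_star_nonneg g)
  funext i
  rw [Pi.smul_apply, smul_eq_mul, hv, mul_div_cancel_of_imp' fun h => congrFun (hg h) i]

theorem stmt2_general {n l : ℕ} (hl : 0 < l)
    (V : Matrix (Fin n) (Fin l) ℝ) (hV : Vᵀ * V = 1)
    (T : Matrix (Fin l) (Fin l) ℝ) (hT : T.PosDef)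
    (U : Matrix (Fin n) (Fin (n - l)) ℝ) (hU : U * Uᵀ = 1 - V * Vᵀ)
    (c : ℝ)
    (Ht : Matrix (Fin n) (Fin n) ℝ) (hHt : Ht = V * T * Vᵀ + c • (U * Uᵀ))
    (hHtpd : Ht.PosDef)
    (lo hi : Fin n → ℝ) (C : Set (Fin n → ℝ))
    (hC : C = {v : Fin n → ℝ | ∀ i, lo i ≤ v i ∧ v i ≤ hi i})
    (x : Fin n → ℝ) (hx : x ∈ C)
    (g : Fin n → ℝ)
    (hcol : ∀ i, V i ⟨0, hl⟩ = g i / Real.sqrt (g ⬝ᵥ g))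
    (μ : ℝ) (hμ : 0 < μ)
    (y : Fin n → ℝ) (hy : y = x - μ • ((V * T⁻¹ * Vᵀ) *ᵥ g))
    (xp : Fin n → ℝ) (hxpC : xp ∈ C)
    (hproj : ∀ z ∈ C, (xp - y) ⬝ᵥ Ht *ᵥ (xp - y) ≤ (z - y) ⬝ᵥ Ht *ᵥ (z - y))
    (d : Fin n → ℝ) (hd : d = xp - x) :
    g ⬝ᵥ d ≤ -(1 / μ) * (d ⬝ᵥ Ht *ᵥ d) ∧ g ⬝ᵥ d ≤ 0 := by
  have hCconv : Convex ℝ C := by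
    simpa [hC, Set.Icc, Pi.le_def, forall_and] using convex_Icc lo hi
  have hg : (V * Vᵀ) *ᵥ g = g := by
    have hgcol : g = √(g ⬝ᵥ g) • V *ᵥ Pi.single ⟨0, hl⟩ 1 :=
      eq_sqrt_dotProduct_self_smul (by simpa using hcol)
    rw [hgcol, mulVec_smul, mul_transpose_mulVec_mulVec hV]
  have hnewton : Ht *ᵥ ((V * T⁻¹ * Vᵀ) *ᵥ g) = g := by
    rw [mulVec_mulVec, hHt, add_smul_mul_mul_nonsing_inv_mul_transpose hV hT.det_pos.ne'.isUnit
      (hU ▸ one_sub_mul_transpose_mul_self hV), hg]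
  have hvar := dotProduct_mulVec_sub_nonneg_of_forall_le
    (isHermitian_iff_isSymm.mp hHtpd.isHermitian) hCconv hxpC hproj hx
  rw [show x - xp = -d by rw [hd, neg_sub], show xp - y = d + μ • ((V * T⁻¹ * Vᵀ) *ᵥ g) by
    rw [hy, hd]; abel] at hvar
  simp only [mulVec_add, mulVec_smul, hnewton, neg_dotProduct, dotProduct_add,
    dotProduct_smul, smul_eq_mul, dotProduct_comm d g] at hvar
  have hdd : 0 ≤ d ⬝ᵥ Ht *ᵥ d := by simpa using hHtpd.posSemidef.dotProduct_mulVec_nonneg d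
  have hfirst : g ⬝ᵥ d ≤ -(1 / μ) * (d ⬝ᵥ Ht *ᵥ d) := by
    rw [neg_mul, one_div_mul_eq_div, le_neg, div_le_iff₀ hμ]
    linarith
  exact ⟨hfirst, hfirst.trans <|
    mul_nonpos_of_nonpos_of_nonneg (neg_nonpos.mpr (one_div_pos.mpr hμ).le) hdd⟩

/-- Descent direction lemma for PNKH-B: with `H̃ = V T Vᵀ + c U Uᵀ` symmetric positive
definite, `V` with orthonormal columns whose first column is the normalized gradient
`g/‖g‖₂`, `y = x - μ V T⁻¹ Vᵀ g`, and `x⁺` the `H̃`-metric projection of `y` onto the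
box `C ∋ x`, the step `d = x⁺ - x` satisfies `gᵀ d ≤ -(1/μ) dᵀ H̃ d ≤ 0`. -/
theorem stmt2 {n l : ℕ} (hl : 0 < l)
    (V : Matrix (Fin n) (Fin l) ℝ) (hV : Vᵀ * V = 1)
    (T : Matrix (Fin l) (Fin l) ℝ) (hT : T.PosDef)
    (U : Matrix (Fin n) (Fin (n - l)) ℝ) (hU : U * Uᵀ = 1 - V * Vᵀ)
    (c : ℝ) (hc : 0 < c)
    (Ht : Matrix (Fin n) (Fin n) ℝ) (hHt : Ht = V * T * Vᵀ + c • (U * Uᵀ))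
    (hHtpd : Ht.PosDef)
    (lo hi : Fin n → ℝ) (C : Set (Fin n → ℝ))
    (hC : C = {v : Fin n → ℝ | ∀ i, lo i ≤ v i ∧ v i ≤ hi i})
    (f : (Fin n → ℝ) → ℝ) (x : Fin n → ℝ) (hx : x ∈ C)
    (g : Fin n → ℝ) (hg : HasGradientAt (fun v : EuclideanSpace ℝ (Fin n) => f v) (WithLp.toLp 2 g) (WithLp.toLp 2 x))
    (hgne : g ≠ 0)
    (hcol : ∀ i, V i ⟨0, hl⟩ = g i / Real.sqrt (g ⬝ᵥ g))
    (μ : ℝ) (hμ : 0 < μ)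
    (y : Fin n → ℝ) (hy : y = x - μ • ((V * T⁻¹ * Vᵀ) *ᵥ g))
    (xp : Fin n → ℝ) (hxpC : xp ∈ C)
    (hproj : ∀ z ∈ C, (xp - y) ⬝ᵥ Ht *ᵥ (xp - y) ≤ (z - y) ⬝ᵥ Ht *ᵥ (z - y))
    (d : Fin n → ℝ) (hd : d = xp - x) :
    g ⬝ᵥ d ≤ -(1 / μ) * (d ⬝ᵥ Ht *ᵥ d) ∧ g ⬝ᵥ d ≤ 0 :=
  stmt2_general hl V hV T hT U hU c Ht hHt hHtpd lo hi C hC x hx g hcol μ hμ y hy xp hxpC hproj d hd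
end

section
/- (Armijo condition for small steps) Suppose ∇f is L-Lipschitz continuous on the box C, H̃_k is symmetric with H̃_k ⪰ sI for some s > 0, and the step d_k = x_{k+1} − x_k satisfies ∇f(x_k)ᵀ d_k ≤ −(1/μ_k) d_kᵀ H̃_k d_k with x_k, x_{k+1} ∈ C. Then for any line search parameter α ∈ (0,1), if 0 < μ_k ≤ min(1, (2s/L)(1−α)), the sufficient decrease condition f(x_{k+1}) ≤ f(x_k) + α ∇f(x_k)ᵀ (x_{k+1} − x_k) holds. -/
/-!
Along the segment from `x` to `y`, the Lipschitz bound on the gradient gives the descent lemma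
`f y ≤ f x + ⟪∇f x, d⟫ + (L / 2) ‖d‖²` with `d = y - x`, the box being convex. The step condition
and `H ⪰ sI` give `μ ⟪∇f x, d⟫ ≤ -s ‖d‖²`, so the curvature term `(L / 2) ‖d‖²` is absorbed by the
share `1 - α` of the linear term as soon as `μ L ≤ 2 s (1 - α)`.
-/

open Matrix RealInnerProductSpace

section DescentLemma

variable {E : Type*} [NormedAddCommGroup E] [InnerProductSpace ℝ E] [CompleteSpace E]

theorem HasGradientAt.hasDerivAt_comp_add_smul {f : E → ℝ} {f' x d : E} {t : ℝ}
    (h : HasGradientAt f f' (x + t • d)) :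
    HasDerivAt (fun t : ℝ => f (x + t • d)) ⟪f', d⟫ t := by
  have hline : HasDerivAt (fun t : ℝ => x + t • d) d t := by
    simpa using ((hasDerivAt_id t).smul_const d).const_add x
  have hcomp := h.hasFDerivAt.comp_hasDerivAt t hline
  simp only [InnerProductSpace.toDual_apply_apply] at hcomp
  exact hcomp

theorem Convex.le_add_inner_add_of_lipschitz_gradient {f : E → ℝ} {g : E → E} {C : Set E} {L : ℝ}
    (hC : Convex ℝ C) (hg : ∀ x ∈ C, HasGradientAt f (g x) x)
    (hlip : ∀ x ∈ C, ∀ y ∈ C, ‖g x - g y‖ ≤ L * ‖x - y‖) {x y : E} (hx : x ∈ C) (hy : y ∈ C) :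
    f y ≤ f x + ⟪g x, y - x⟫ + L / 2 * ‖y - x‖ ^ 2 := by
  set d := y - x
  have hseg : ∀ t ∈ Set.Icc (0 : ℝ) 1, x + t • d ∈ C := fun t ht =>
    hC.add_smul_sub_mem hx hy ht
  -- `ψ` removes from `t ↦ f (x + t • d)` its tangent at `0` and the quadratic majorant of the error.
  set ψ : ℝ → ℝ := fun t => f (x + t • d) - ⟪g x, d⟫ * t - L / 2 * ‖d‖ ^ 2 * t ^ 2
  have hψ : ∀ t ∈ Set.Icc (0 : ℝ) 1,
      HasDerivAt ψ (⟪g (x + t • d) - g x, d⟫ - L * t * ‖d‖ ^ 2) t := by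
    intro t ht
    have hq := (hasDerivAt_pow 2 t).const_mul (L / 2 * ‖d‖ ^ 2)
    refine (((hg _ (hseg t ht)).hasDerivAt_comp_add_smul.sub
      ((hasDerivAt_id t).const_mul ⟪g x, d⟫)).sub hq).congr_deriv ?_
    norm_num [inner_sub_left]
    ring
  have hψ_nonpos : ∀ t ∈ Set.Icc (0 : ℝ) 1, ⟪g (x + t • d) - g x, d⟫ - L * t * ‖d‖ ^ 2 ≤ 0 := by
    intro t ht
    have hbound : ‖g (x + t • d) - g x‖ ≤ L * (t * ‖d‖) := by
      simpa [norm_smul, abs_of_nonneg ht.1] using hlip _ (hseg t ht) x hx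
    have := (real_inner_le_norm _ d).trans (mul_le_mul_of_nonneg_right hbound (norm_nonneg d))
    linarith
  have hanti : AntitoneOn ψ (Set.Icc 0 1) :=
    antitoneOn_of_hasDerivWithinAt_nonpos (convex_Icc 0 1)
      (fun t ht => (hψ t ht).continuousAt.continuousWithinAt)
      (fun t ht => (hψ t (interior_subset ht)).hasDerivWithinAt)
      (fun t ht => hψ_nonpos t (interior_subset ht))
  have h10 : ψ 1 ≤ ψ 0 := hanti (by norm_num) (by norm_num) zero_le_one
  simp only [ψ, one_smul, zero_smul, add_zero, mul_one, one_pow, mul_zero, sub_zero,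
    add_sub_cancel, d] at h10
  linarith

end DescentLemma

theorem convex_euclideanSpace_box {ι : Type*} (lo hi : ι → ℝ) :
    Convex ℝ {v : EuclideanSpace ℝ ι | ∀ i, lo i ≤ v i ∧ v i ≤ hi i} := by
  have hbox : {v : EuclideanSpace ℝ ι | ∀ i, lo i ≤ v i ∧ v i ≤ hi i} =
      WithLp.linearEquiv 2 ℝ (ι → ℝ) ⁻¹' Set.Icc lo hi := by
    ext v
    simp [Pi.le_def, forall_and]
  rw [hbox]
  exact (convex_Icc lo hi).linear_preimage (WithLp.linearEquiv 2 ℝ (ι → ℝ)).toLinearMap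

theorem EuclideanSpace.dotProduct_eq_inner {ι : Type*} [Fintype ι] (a b : EuclideanSpace ℝ ι) :
    a ⬝ᵥ b = ⟪a, b⟫ := by
  rw [EuclideanSpace.inner_eq_star_dotProduct, star_trivial, dotProduct_comm]

theorem add_half_mul_le_mul_of_step_bound {D N Q μ s L α : ℝ} (hμ : 0 < μ) (hα : α < 1)
    (hN : 0 ≤ N) (hQ : s * N ≤ Q) (hstep : D ≤ -(1 / μ) * Q) (hμL : μ * L ≤ 2 * s * (1 - α)) :
    D + L / 2 * N ≤ α * D := by
  have hμD : μ * D ≤ -(s * N) :=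
    calc μ * D ≤ μ * (-(1 / μ) * Q) := mul_le_mul_of_nonneg_left hstep hμ.le
      _ = -Q := by field_simp
      _ ≤ -(s * N) := neg_le_neg hQ
  have : μ * ((1 - α) * D + L / 2 * N) ≤ 0 := by
    nlinarith [mul_le_mul_of_nonneg_left hμD (sub_nonneg.2 hα.le),
      mul_nonneg (sub_nonneg.2 hμL) hN]
  linarith [nonpos_of_mul_nonpos_right this hμ]

theorem stmt4_general {n : ℕ} (f : EuclideanSpace ℝ (Fin n) → ℝ)
    (g : EuclideanSpace ℝ (Fin n) → EuclideanSpace ℝ (Fin n))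
    (hg : ∀ x, HasGradientAt f (g x) x)
    (lo hi : Fin n → ℝ) (C : Set (EuclideanSpace ℝ (Fin n)))
    (hC : C = {v : EuclideanSpace ℝ (Fin n) | ∀ i, lo i ≤ v i ∧ v i ≤ hi i})
    (L s α : ℝ) (hL : 0 < L) (hα1 : α < 1)
    (hlip : ∀ x ∈ C, ∀ y ∈ C, ‖g x - g y‖ ≤ L * ‖x - y‖)
    (Hk : Matrix (Fin n) (Fin n) ℝ)
    (hpd : ∀ z : Fin n → ℝ, s * (z ⬝ᵥ z) ≤ z ⬝ᵥ Hk *ᵥ z)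
    (xk xk1 : EuclideanSpace ℝ (Fin n)) (hxk : xk ∈ C) (hxk1 : xk1 ∈ C)
    (μ : ℝ) (hμ0 : 0 < μ) (hμ : μ ≤ min 1 (2 * s / L * (1 - α)))
    (hdesc : g xk ⬝ᵥ (xk1 - xk) ≤ -(1 / μ) * ((xk1 - xk) ⬝ᵥ Hk *ᵥ (xk1 - xk))) :
    f xk1 ≤ f xk + α * (g xk ⬝ᵥ (xk1 - xk)) := by
  have hconvex : Convex ℝ C := hC ▸ convex_euclideanSpace_box lo hi
  have hdescent := hconvex.le_add_inner_add_of_lipschitz_gradient (fun x _ => hg x) hlip hxk hxk1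
  rw [← WithLp.ofLp_sub, EuclideanSpace.dotProduct_eq_inner] at hdesc ⊢
  have hQ : s * ‖xk1 - xk‖ ^ 2 ≤ (xk1 - xk).ofLp ⬝ᵥ Hk *ᵥ (xk1 - xk).ofLp := by
    simpa only [EuclideanSpace.dotProduct_eq_inner, real_inner_self_eq_norm_sq] using
      hpd (xk1 - xk).ofLp
  have hμL : μ * L ≤ 2 * s * (1 - α) := by
    have := hμ.trans (min_le_right _ _)
    rwa [div_mul_eq_mul_div, le_div_iff₀ hL] at this
  linarith [add_half_mul_le_mul_of_step_bound hμ0 hα1 (sq_nonneg _) hQ hdesc hμL]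

/-- Armijo condition for small steps: if `∇f` is `L`-Lipschitz on the box `C`,
`H̃ₖ ⪰ sI` is symmetric, the step satisfies the descent inequality
`∇f(xₖ)ᵀ dₖ ≤ -(1/μₖ) dₖᵀ H̃ₖ dₖ`, and `0 < μₖ ≤ min(1, (2s/L)(1-α))`,
then the sufficient decrease condition holds. -/
theorem stmt4 {n : ℕ} (f : EuclideanSpace ℝ (Fin n) → ℝ)
    (g : EuclideanSpace ℝ (Fin n) → EuclideanSpace ℝ (Fin n))
    (hg : ∀ x, HasGradientAt f (g x) x)
    (lo hi : Fin n → ℝ) (C : Set (EuclideanSpace ℝ (Fin n)))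
    (hC : C = {v : EuclideanSpace ℝ (Fin n) | ∀ i, lo i ≤ v i ∧ v i ≤ hi i})
    (L s α : ℝ) (hL : 0 < L) (hs : 0 < s) (hα0 : 0 < α) (hα1 : α < 1)
    (hlip : ∀ x ∈ C, ∀ y ∈ C, ‖g x - g y‖ ≤ L * ‖x - y‖)
    (Hk : Matrix (Fin n) (Fin n) ℝ) (hsym : Hk.IsSymm)
    (hpd : ∀ z : Fin n → ℝ, s * (z ⬝ᵥ z) ≤ z ⬝ᵥ Hk *ᵥ z)
    (xk xk1 : EuclideanSpace ℝ (Fin n)) (hxk : xk ∈ C) (hxk1 : xk1 ∈ C)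
    (μ : ℝ) (hμ0 : 0 < μ) (hμ : μ ≤ min 1 (2 * s / L * (1 - α)))
    (hdesc : g xk ⬝ᵥ (xk1 - xk) ≤ -(1 / μ) * ((xk1 - xk) ⬝ᵥ Hk *ᵥ (xk1 - xk))) :
    f xk1 ≤ f xk + α * (g xk ⬝ᵥ (xk1 - xk)) :=
  stmt4_general f g hg lo hi C hC L s α hL hα1 hlip Hk hpd xk xk1 hxk hxk1 μ hμ0 hμ hdesc
end

section
/- (Global convergence of PNKH-B) Suppose f : ℝⁿ → ℝ is differentiable with L-Lipschitz gradient, C is a compact box, and the sequence (x_k) ⊆ C satisfies: (i) f(x_{k+1}) ≤ f(x_k) + α ∇f(x_k)ᵀ(x_{k+1} − x_k) for a fixed α ∈ (0,1); (ii) ∇f(x_k)ᵀ(x_{k+1} − x_k) ≤ −(1/μ_k)(x_{k+1} − x_k)ᵀ H̃_k (x_{k+1} − x_k) with step sizes 0 < μ_k ≤ 1 and symmetric matrices H̃_k ⪰ sI for a fixed s > 0. Then ‖x_{k+1} − x_k‖₂ → 0 and f(x_k) converges. -/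
/-!
Combining the Armijo condition with the descent inequality and `H̃ₖ ⪰ sI` gives the sufficient
decrease `f(xₖ₊₁) + α s ‖xₖ₊₁ - xₖ‖² ≤ f(xₖ)`. Since `f` is continuous on the compact set `C`,
the values `f(xₖ)` decrease to a limit, so the gaps `f(xₖ) - f(xₖ₊₁)`, which dominate
`α s ‖xₖ₊₁ - xₖ‖²`, tend to zero.
-/

open Matrix Filter Topology

lemma EuclideanSpace.dotProduct_self_ofLp {n : ℕ} (v : EuclideanSpace ℝ (Fin n)) :
    (v : Fin n → ℝ) ⬝ᵥ v = ‖v‖ ^ 2 := by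
  rw [← real_inner_self_eq_norm_sq, EuclideanSpace.inner_eq_star_dotProduct, star_trivial]

lemma add_mul_le_of_armijo_of_descent {f₀ f₁ gd q δ α μ s : ℝ}
    (hα : 0 < α) (hμ0 : 0 < μ) (hμ1 : μ ≤ 1) (hs : 0 < s) (hδ : 0 ≤ δ)
    (harmijo : f₁ ≤ f₀ + α * gd) (hdesc : gd ≤ -(1 / μ) * q) (hq : s * δ ≤ q) :
    f₁ + α * s * δ ≤ f₀ := by
  have hq0 : 0 ≤ q := (mul_nonneg hs.le hδ).trans hq
  have hμ : q ≤ 1 / μ * q := le_mul_of_one_le_left hq0 (one_le_one_div hμ0 hμ1)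
  nlinarith

lemma tendsto_sub_succ_of_antitone_of_bddBelow {u : ℕ → ℝ} (hu : Antitone u)
    (hbdd : BddBelow (Set.range u)) :
    Tendsto (fun k => u k - u (k + 1)) atTop (𝓝 0) ∧ ∃ a, Tendsto u atTop (𝓝 a) := by
  have hlim := tendsto_atTop_ciInf hu hbdd
  refine ⟨?_, _, hlim⟩
  simpa using hlim.sub (hlim.comp (tendsto_add_atTop_nat 1))

theorem tendsto_zero_of_add_mul_sq_le {u d : ℕ → ℝ} {c : ℝ} (hc : 0 < c)
    (hd : ∀ k, 0 ≤ d k) (hbdd : BddBelow (Set.range u))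
    (hdec : ∀ k, u (k + 1) + c * d k ^ 2 ≤ u k) :
    Tendsto d atTop (𝓝 0) ∧ ∃ a, Tendsto u atTop (𝓝 a) := by
  have hu : Antitone u := antitone_nat_of_succ_le fun k => by nlinarith [hdec k, sq_nonneg (d k)]
  obtain ⟨hgap, hconv⟩ := tendsto_sub_succ_of_antitone_of_bddBelow hu hbdd
  refine ⟨?_, hconv⟩
  have hsq : Tendsto (fun k => d k ^ 2) atTop (𝓝 0) := by
    refine squeeze_zero (fun k => sq_nonneg _) (fun k => ?_) (by simpa using hgap.div_const c)
    rw [le_div_iff₀ hc]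
    linarith [hdec k]
  simpa [Real.sqrt_sq (hd _)] using hsq.sqrt

theorem stmt10_general {n : ℕ} (f : EuclideanSpace ℝ (Fin n) → ℝ)
    (g : EuclideanSpace ℝ (Fin n) → EuclideanSpace ℝ (Fin n))
    (hg : ∀ x, HasGradientAt f (g x) x)
    (C : Set (EuclideanSpace ℝ (Fin n)))
    (hCcompact : IsCompact C)
    (x : ℕ → EuclideanSpace ℝ (Fin n)) (hxC : ∀ k, x k ∈ C)
    (α : ℝ) (hα0 : 0 < α)
    (harmijo : ∀ k, f (x (k + 1)) ≤ f (x k) + α * (g (x k) ⬝ᵥ (x (k + 1) - x k)))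
    (μ : ℕ → ℝ) (hμ0 : ∀ k, 0 < μ k) (hμ1 : ∀ k, μ k ≤ 1)
    (Ht : ℕ → Matrix (Fin n) (Fin n) ℝ)
    (s : ℝ) (hs : 0 < s)
    (hpd : ∀ k, ∀ z : Fin n → ℝ, s * (z ⬝ᵥ z) ≤ z ⬝ᵥ (Ht k) *ᵥ z)
    (hdesc : ∀ k, g (x k) ⬝ᵥ (x (k + 1) - x k) ≤
      -(1 / μ k) * ((x (k + 1) - x k) ⬝ᵥ (Ht k) *ᵥ (x (k + 1) - x k))) :
    Filter.Tendsto (fun k => ‖x (k + 1) - x k‖) Filter.atTop (nhds 0) ∧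
      ∃ a : ℝ, Filter.Tendsto (fun k => f (x k)) Filter.atTop (nhds a) := by
  have hdec (k : ℕ) : f (x (k + 1)) + α * s * ‖x (k + 1) - x k‖ ^ 2 ≤ f (x k) := by
    have hq := hpd k (x (k + 1) - x k)
    rw [← WithLp.ofLp_sub, EuclideanSpace.dotProduct_self_ofLp] at hq
    exact add_mul_le_of_armijo_of_descent hα0 (hμ0 k) (hμ1 k) hs (sq_nonneg _)
      (harmijo k) (hdesc k) hq
  have hcont : Continuous f :=
    continuous_iff_continuousAt.2 fun y => (hg y).differentiableAt.continuousAt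
  have hbdd : BddBelow (Set.range fun k => f (x k)) :=
    (hCcompact.bddBelow_image hcont.continuousOn).mono
      (Set.range_subset_iff.2 fun k => Set.mem_image_of_mem f (hxC k))
  exact tendsto_zero_of_add_mul_sq_le (mul_pos hα0 hs) (fun _ => norm_nonneg _) hbdd hdec

/-- Global convergence core of PNKH-B: under the Armijo sufficient decrease condition
and the descent inequality with uniformly positive definite symmetric metrics
`H̃ₖ ⪰ sI`, for iterates in a compact box `C` the successive differences vanish and
the objective values converge. -/
theorem stmt10 {n : ℕ} (f : EuclideanSpace ℝ (Fin n) → ℝ)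
    (g : EuclideanSpace ℝ (Fin n) → EuclideanSpace ℝ (Fin n))
    (hg : ∀ x, HasGradientAt f (g x) x)
    (L : ℝ) (hL : 0 < L) (hlip : ∀ x y, ‖g x - g y‖ ≤ L * ‖x - y‖)
    (lo hi : Fin n → ℝ) (C : Set (EuclideanSpace ℝ (Fin n)))
    (hC : C = {v : EuclideanSpace ℝ (Fin n) | ∀ i, lo i ≤ v i ∧ v i ≤ hi i})
    (hCcompact : IsCompact C)
    (x : ℕ → EuclideanSpace ℝ (Fin n)) (hxC : ∀ k, x k ∈ C)
    (α : ℝ) (hα0 : 0 < α) (hα1 : α < 1)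
    (harmijo : ∀ k, f (x (k + 1)) ≤ f (x k) + α * (g (x k) ⬝ᵥ (x (k + 1) - x k)))
    (μ : ℕ → ℝ) (hμ0 : ∀ k, 0 < μ k) (hμ1 : ∀ k, μ k ≤ 1)
    (Ht : ℕ → Matrix (Fin n) (Fin n) ℝ) (hsym : ∀ k, (Ht k).IsSymm)
    (s : ℝ) (hs : 0 < s)
    (hpd : ∀ k, ∀ z : Fin n → ℝ, s * (z ⬝ᵥ z) ≤ z ⬝ᵥ (Ht k) *ᵥ z)
    (hdesc : ∀ k, g (x k) ⬝ᵥ (x (k + 1) - x k) ≤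
      -(1 / μ k) * ((x (k + 1) - x k) ⬝ᵥ (Ht k) *ᵥ (x (k + 1) - x k))) :
    Filter.Tendsto (fun k => ‖x (k + 1) - x k‖) Filter.atTop (nhds 0) ∧
      ∃ a : ℝ, Filter.Tendsto (fun k => f (x k)) Filter.atTop (nhds a) :=
  stmt10_general f g hg C hCcompact x hxC α hα0 harmijo μ hμ0 hμ1 Ht s hs hpd hdesc
end

section
/- (Block diagonal metric decouples the projection) Let P ∈ ℝ^{(n−m)×n} and R ∈ ℝ^{m×n} be complementary coordinate selection matrices (Pᵀ P + Rᵀ R = I, P Rᵀ = 0, P Pᵀ = I_{n−m}, R Rᵀ = I_m), F ∈ ℝ^{(n−m)×(n−m)} symmetric positive definite, ν > 0, and H = Pᵀ F P + ν Rᵀ R. Then for a box C = [l,u], the projection Π_H(y) decouples: its inactive coordinates are P Π_H(y) = Π_F^{[Pl, Pu]}(P y) (projection of Py onto [Pl, Pu] in the F-norm) and its active coordinates are R Π_H(y) = max(min(R y, R u), R l). -/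
open Matrix

lemma clip_unique {l u a t : ℝ} (hlt : l ≤ t) (htu : t ≤ u)
    (h : (t - a) * (t - a) ≤ (max (min a u) l - a) * (max (min a u) l - a)) :
    t = max (min a u) l := by
  rcases le_total a l with h1 | h1
  · have hc : max (min a u) l = l := by
      rw [min_eq_left (h1.trans (hlt.trans htu)), max_eq_right h1]
    rw [hc] at h ⊢
    nlinarith
  · rcases le_total a u with h2 | h2
    · have hc : max (min a u) l = a := by rw [min_eq_left h2, max_eq_left h1]
      rw [hc] at h ⊢
      nlinarith
    · have hc : max (min a u) l = u := by rw [min_eq_right h2, max_eq_left (hlt.trans htu)]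
      rw [hc] at h ⊢
      nlinarith

/-- Block diagonal metric decouples the projection: with complementary coordinate
selection matrices `P`, `R` and the block metric `H = Pᵀ F P + ν Rᵀ R`, the
`H`-metric projection of `y` onto the box `[l,u]` has inactive coordinates equal to
the `F`-metric projection of `Py` onto `[Pl, Pu]` and active coordinates given by
componentwise Euclidean clipping of `Ry` to `[Rl, Ru]`. -/
theorem stmt18 {n m : ℕ}
    (pIdx : Fin (n - m) → Fin n) (rIdx : Fin m → Fin n)
    (P : Matrix (Fin (n - m)) (Fin n) ℝ) (R : Matrix (Fin m) (Fin n) ℝ)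
    (hPdef : ∀ i j, P i j = if j = pIdx i then 1 else 0)
    (hRdef : ∀ i j, R i j = if j = rIdx i then 1 else 0)
    (hcompl : Pᵀ * P + Rᵀ * R = 1) (hPR : P * Rᵀ = 0)
    (hPP : P * Pᵀ = 1) (hRR : R * Rᵀ = 1)
    (F : Matrix (Fin (n - m)) (Fin (n - m)) ℝ) (hF : F.PosDef)
    (ν : ℝ) (hν : 0 < ν)
    (H : Matrix (Fin n) (Fin n) ℝ) (hH : H = Pᵀ * F * P + ν • (Rᵀ * R))
    (lo hi : Fin n → ℝ) (y p : Fin n → ℝ)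
    (hpC : ∀ i, lo i ≤ p i ∧ p i ≤ hi i)
    (hproj : ∀ z : Fin n → ℝ, (∀ i, lo i ≤ z i ∧ z i ≤ hi i) →
      (p - y) ⬝ᵥ H *ᵥ (p - y) ≤ (z - y) ⬝ᵥ H *ᵥ (z - y)) :
    ((∀ i, (P *ᵥ lo) i ≤ (P *ᵥ p) i ∧ (P *ᵥ p) i ≤ (P *ᵥ hi) i) ∧
      (∀ w : Fin (n - m) → ℝ, (∀ i, (P *ᵥ lo) i ≤ w i ∧ w i ≤ (P *ᵥ hi) i) →
        (P *ᵥ p - P *ᵥ y) ⬝ᵥ F *ᵥ (P *ᵥ p - P *ᵥ y) ≤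
          (w - P *ᵥ y) ⬝ᵥ F *ᵥ (w - P *ᵥ y))) ∧
    (R *ᵥ p = fun i => max (min ((R *ᵥ y) i) ((R *ᵥ hi) i)) ((R *ᵥ lo) i)) := by
  -- pointwise descriptions of P *ᵥ and R *ᵥ
  have hPv : ∀ (v : Fin n → ℝ) i, (P *ᵥ v) i = v (pIdx i) := by
    intro v i
    simp [Matrix.mulVec, dotProduct, hPdef, ite_mul, one_mul, zero_mul]
  have hRv : ∀ (v : Fin n → ℝ) k, (R *ᵥ v) k = v (rIdx k) := by
    intro v k
    simp [Matrix.mulVec, dotProduct, hRdef, ite_mul, one_mul, zero_mul]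
  -- injectivity and disjointness
  have hrinj : Function.Injective rIdx := by
    intro k k' hkk'
    by_contra hne
    have := congrFun (congrFun hRR k) k'
    simp [Matrix.mul_apply, hRdef, Matrix.one_apply, hne, hkk',
      Finset.sum_ite_eq'] at this
  have hdisj : ∀ i k, pIdx i ≠ rIdx k := by
    intro i k heq
    have := congrFun (congrFun hPR i) k
    simp [Matrix.mul_apply, hPdef, hRdef, heq, Finset.sum_ite_eq'] at this
  have hcover : ∀ j : Fin n, (∃ i, pIdx i = j) ∨ (∃ k, rIdx k = j) := by
    intro j
    by_contra hcon
    push_neg at hcon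
    have := congrFun (congrFun hcompl j) j
    have h1 : (Pᵀ * P) j j = 0 := by
      rw [Matrix.mul_apply]
      apply Finset.sum_eq_zero
      intro i _
      simp [Matrix.transpose_apply, hPdef, Ne.symm (hcon.1 i)]
    have h2 : (Rᵀ * R) j j = 0 := by
      rw [Matrix.mul_apply]
      apply Finset.sum_eq_zero
      intro k _
      simp [Matrix.transpose_apply, hRdef, Ne.symm (hcon.2 k)]
    rw [Matrix.add_apply, h1, h2] at this
    simp [Matrix.one_apply] at this
  -- quadratic form decomposition
  have hQuad : ∀ v : Fin n → ℝ, v ⬝ᵥ H *ᵥ v =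
      (P *ᵥ v) ⬝ᵥ F *ᵥ (P *ᵥ v) + ν * ((R *ᵥ v) ⬝ᵥ (R *ᵥ v)) := by
    intro v
    subst hH
    rw [Matrix.add_mulVec, dotProduct_add, Matrix.smul_mulVec,
      dotProduct_smul]
    congr 1
    · rw [Matrix.mul_assoc, ← Matrix.mulVec_mulVec, ← Matrix.mulVec_mulVec,
        Matrix.dotProduct_mulVec, Matrix.vecMul_transpose]
    · rw [smul_eq_mul]
      congr 1
      rw [← Matrix.mulVec_mulVec, Matrix.dotProduct_mulVec, Matrix.vecMul_transpose]
  have hRPt : R * Pᵀ = 0 := by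
    have := congrArg Matrix.transpose hPR
    simpa [Matrix.transpose_mul] using this
  refine ⟨⟨?_, ?_⟩, ?_⟩
  · intro i
    simp only [hPv]
    exact hpC _
  · -- optimality of P p in the F metric
    intro w hw
    set z : Fin n → ℝ := Pᵀ *ᵥ w + Rᵀ *ᵥ (R *ᵥ p) with hz
    have hPz : P *ᵥ z = w := by
      rw [hz, Matrix.mulVec_add, Matrix.mulVec_mulVec, Matrix.mulVec_mulVec, hPP, hPR]
      simp
    have hRz : R *ᵥ z = R *ᵥ p := by
      rw [hz, Matrix.mulVec_add, Matrix.mulVec_mulVec, Matrix.mulVec_mulVec, hRPt, hRR]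
      simp
    have hzC : ∀ j, lo j ≤ z j ∧ z j ≤ hi j := by
      intro j
      rcases hcover j with ⟨i, hi'⟩ | ⟨k, hk⟩
      · have hzj : z j = w i := by rw [← hi', ← hPv z i, hPz]
        have h1 := (hw i).1
        have h2 := (hw i).2
        rw [hPv] at h1 h2
        rw [hzj, hi'] at *
        exact ⟨h1, h2⟩
      · have hzj : z j = p j := by rw [← hk, ← hRv z k, hRz, hRv]
        rw [hzj]; exact hpC j
    have := hproj z hzC
    rw [hQuad, hQuad] at this
    have hPs : P *ᵥ (z - y) = w - P *ᵥ y := by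
      rw [Matrix.mulVec_sub, hPz]
    have hRs : R *ᵥ (z - y) = R *ᵥ (p - y) := by
      rw [Matrix.mulVec_sub, hRz, Matrix.mulVec_sub]
    rw [hPs, hRs, Matrix.mulVec_sub P p y] at this
    linarith
  · -- active coordinates are clipped
    funext i
    set j0 := rIdx i with hj0
    set c : ℝ := max (min (y j0) (hi j0)) (lo j0) with hc
    have hlu : lo j0 ≤ hi j0 := (hpC j0).1.trans (hpC j0).2
    set z : Fin n → ℝ := Function.update p j0 c with hz
    have hzC : ∀ j, lo j ≤ z j ∧ z j ≤ hi j := by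
      intro j
      by_cases hj : j = j0
      · subst hj
        rw [hz, Function.update_self]
        exact ⟨le_max_right _ _, max_le (min_le_right _ _) hlu⟩
      · rw [hz, Function.update_of_ne hj]
        exact hpC j
    have hPz : P *ᵥ z = P *ᵥ p := by
      funext i'
      rw [hPv, hPv, hz, Function.update_of_ne (hdisj i' i)]
    have hRz : ∀ k, (R *ᵥ z) k = if k = i then c else (R *ᵥ p) k := by
      intro k
      rw [hRv, hRv]
      by_cases hk : k = i
      · subst hk
        simp [hz, hj0]
      · rw [if_neg hk, hz, Function.update_of_ne (fun h => hk (hrinj h))]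
    have := hproj z hzC
    have hPs : P *ᵥ (z - y) = P *ᵥ (p - y) := by
      rw [Matrix.mulVec_sub, hPz, ← Matrix.mulVec_sub]
    rw [hQuad, hQuad, hPs] at this
    have hkey : ((R *ᵥ (p - y)) ⬝ᵥ (R *ᵥ (p - y))) ≤
        ((R *ᵥ (z - y)) ⬝ᵥ (R *ᵥ (z - y))) := by
      have hν' := hν
      nlinarith [this]
    -- compare the sums term by term
    have hsum : ∀ k, k ≠ i →
        (R *ᵥ (z - y)) k * (R *ᵥ (z - y)) k = (R *ᵥ (p - y)) k * (R *ᵥ (p - y)) k := by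
      intro k hk
      have : (R *ᵥ (z - y)) k = (R *ᵥ (p - y)) k := by
        rw [Matrix.mulVec_sub, Matrix.mulVec_sub, Pi.sub_apply, Pi.sub_apply, hRz, if_neg hk]
      rw [this]
    have hsplit1 : ((R *ᵥ (p - y)) ⬝ᵥ (R *ᵥ (p - y))) =
        (R *ᵥ (p - y)) i * (R *ᵥ (p - y)) i +
          ∑ k ∈ Finset.univ.erase i, (R *ᵥ (p - y)) k * (R *ᵥ (p - y)) k := by
      rw [dotProduct]
      rw [← Finset.add_sum_erase _ _ (Finset.mem_univ i)]
    have hsplit2 : ((R *ᵥ (z - y)) ⬝ᵥ (R *ᵥ (z - y))) =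
        (R *ᵥ (z - y)) i * (R *ᵥ (z - y)) i +
          ∑ k ∈ Finset.univ.erase i, (R *ᵥ (z - y)) k * (R *ᵥ (z - y)) k := by
      rw [dotProduct]
      rw [← Finset.add_sum_erase _ _ (Finset.mem_univ i)]
    have hrest : ∑ k ∈ Finset.univ.erase i, (R *ᵥ (z - y)) k * (R *ᵥ (z - y)) k =
        ∑ k ∈ Finset.univ.erase i, (R *ᵥ (p - y)) k * (R *ᵥ (p - y)) k := by
      apply Finset.sum_congr rfl
      intro k hk
      exact hsum k (Finset.ne_of_mem_erase hk)
    have hcoord : (R *ᵥ (p - y)) i * (R *ᵥ (p - y)) i ≤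
        (R *ᵥ (z - y)) i * (R *ᵥ (z - y)) i := by
      rw [hsplit1, hsplit2, hrest] at hkey
      linarith
    have hzi : (R *ᵥ (z - y)) i = c - y j0 := by
      rw [Matrix.mulVec_sub, Pi.sub_apply, hRz, if_pos rfl, hRv]
    have hpi : (R *ᵥ (p - y)) i = p j0 - y j0 := by
      rw [Matrix.mulVec_sub, Pi.sub_apply, hRv, hRv]
    rw [hzi, hpi] at hcoord
    have hfinal : p j0 = c :=
      clip_unique (hpC j0).1 (hpC j0).2 hcoord
    simpa only [hRv] using hfinal
end
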